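/- arXiv:2604.05964 — 7 statements merged into one kernel-verified Lean document; each statement's English description precedes it below -/
import Mathlib

section
/- Let S_g be a K×K real matrix, L_g a 1×K row vector, and w_0 ∈ ℝ^K with (L_g,S_g) observable and (S_g,w_0) controllable, and let u(t) = L_g S_g^t w_0 for 0 ≤ t ≤ T-1 with T ≥ 2K-1. Then the rank of the depth-K Hankel matrix of u(0),...,u(T-2) equals the rank of the depth-(K+1) Hankel matrix of u(0),...,u(T-1); in particular u is not persistently exciting of order K+1. -/
open Matrix

/-- A matrix over a field whose rank equals its (square) size is a unit, in det form. -/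
lemma isUnit_det_of_rank_eq_card {K : ℕ} (A : Matrix (Fin K) (Fin K) ℝ)
    (h : A.rank = K) : IsUnit A.det := by
  have hsurj : Function.Surjective A.mulVec := by
    have : LinearMap.range A.mulVecLin = ⊤ := by
      apply Submodule.eq_top_of_finrank_eq
      rw [← Matrix.rank, h, Module.finrank_pi, Fintype.card_fin]
    intro v
    obtain ⟨w, hw⟩ := LinearMap.range_eq_top.mp this v
    exact ⟨w, hw⟩
  exact (Matrix.isUnit_iff_isUnit_det A).mp (Matrix.mulVec_surjective_iff_isUnit.mp hsurj)

/-- for an observable, reachable K-dimensional signal generator output,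
the depth-K Hankel matrix of u(0..T-2) and the depth-(K+1) Hankel matrix of u(0..T-1)
have the same rank; in particular u is not persistently exciting of order K+1. -/
theorem stmt_2 (K T : ℕ) (hK : 1 ≤ K) (hT : 2 * K - 1 ≤ T)
    (Sg : Matrix (Fin K) (Fin K) ℝ) (Lg : Matrix (Fin 1) (Fin K) ℝ)
    (w0 : Fin K → ℝ) (u : ℕ → ℝ)
    (hu : ∀ t : ℕ, u t = ((Lg * Sg ^ t) *ᵥ w0) 0)
    (hobs : (Matrix.of fun (i : Fin K) (j : Fin K) => (Lg * Sg ^ (i : ℕ)) 0 j).rank = K)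
    (hctrb : (Matrix.of fun (i : Fin K) (j : Fin K) => ((Sg ^ (j : ℕ)) *ᵥ w0) i).rank = K) :
    (Matrix.of fun (i : Fin K) (j : Fin (T - K)) => u ((i : ℕ) + (j : ℕ))).rank =
      (Matrix.of fun (i : Fin (K + 1)) (j : Fin (T - K)) => u ((i : ℕ) + (j : ℕ))).rank ∧
    (Matrix.of fun (i : Fin (K + 1)) (j : Fin (T - K)) => u ((i : ℕ) + (j : ℕ))).rank < K + 1 := by
  -- observability matrix and extended observability matrix, controllability-style matrix
  set O : Matrix (Fin K) (Fin K) ℝ :=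
    Matrix.of fun (i : Fin K) (j : Fin K) => (Lg * Sg ^ (i : ℕ)) 0 j with hO
  set O' : Matrix (Fin (K + 1)) (Fin K) ℝ :=
    Matrix.of fun (i : Fin (K + 1)) (j : Fin K) => (Lg * Sg ^ (i : ℕ)) 0 j with hO'
  set C : Matrix (Fin K) (Fin (T - K)) ℝ :=
    Matrix.of fun (i : Fin K) (j : Fin (T - K)) => ((Sg ^ (j : ℕ)) *ᵥ w0) i with hC
  set H1 : Matrix (Fin K) (Fin (T - K)) ℝ :=
    Matrix.of fun (i : Fin K) (j : Fin (T - K)) => u ((i : ℕ) + (j : ℕ)) with hH1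
  set H2 : Matrix (Fin (K + 1)) (Fin (T - K)) ℝ :=
    Matrix.of fun (i : Fin (K + 1)) (j : Fin (T - K)) => u ((i : ℕ) + (j : ℕ)) with hH2
  have key : ∀ (i j : ℕ), u (i + j) = ∑ k : Fin K, (Lg * Sg ^ i) 0 k * ((Sg ^ j) *ᵥ w0) k := by
    intro i j
    rw [hu, pow_add, ← Matrix.mul_assoc, ← Matrix.mulVec_mulVec]
    simp [Matrix.mulVec, dotProduct]
  have hH1eq : H1 = O * C := by
    ext i j
    simpa [hH1, hO, hC, Matrix.mul_apply] using key i j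
  have hH2eq : H2 = O' * C := by
    ext i j
    simpa [hH2, hO', hC, Matrix.mul_apply] using key i j
  have hOdet : IsUnit O.det := isUnit_det_of_rank_eq_card O hobs
  -- H1 is a row submatrix of H2
  have hsub : H1 = ((1 : Matrix (Fin (K + 1)) (Fin (K + 1)) ℝ).submatrix
      (Fin.castSucc) (Equiv.refl _)) * H2 := by
    rw [Matrix.one_submatrix_mul]
    ext i j
    simp [hH1, hH2]
  have h12 : H1.rank ≤ H2.rank := by
    rw [hsub]; exact Matrix.rank_mul_le_right _ _
  have h21 : H2.rank ≤ H1.rank := by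
    rw [hH1eq, hH2eq, Matrix.rank_mul_eq_right_of_isUnit_det O C hOdet]
    exact Matrix.rank_mul_le_right _ _
  have heq : H1.rank = H2.rank := le_antisymm h12 h21
  refine ⟨heq, ?_⟩
  rw [← heq]
  calc H1.rank ≤ K := Matrix.rank_le_card_height H1 |>.trans (by simp)
    _ < K + 1 := Nat.lt_succ_self K
end

section
/- Suppose u(0),...,u(T-1) is a real sequence with T ≥ 2K-1 such that (i) the depth-K Hankel matrix of u(0),...,u(T-1) has rank K, and (ii) the rank of the depth-K Hankel matrix of u(0),...,u(T-2) equals the rank of the depth-(K+1) Hankel matrix of u(0),...,u(T-1). Then there exist a K×K matrix S_g, a 1×K row vector L_g, and w_0 ∈ ℝ^K with (L_g,S_g) observable and (S_g,w_0) controllable such that u(t) = L_g S_g^t w_0 for all 0 ≤ t ≤ T-1. -/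
/-! The rank condition (ii) says that the last row of the depth-(K+1) Hankel matrix is a linear
combination of the K rows above it, i.e. `u` obeys a linear recurrence of order K on the data
window. The companion matrix `S` of that recurrence, started at `w₀ = (u 0, …, u (K-1))` and read
through the first coordinate, reproduces `u`, and its observability matrix is the identity. The
columns of the depth-K Hankel matrix are the vectors `S^j w₀`, which by Cayley–Hamilton lie in the
span of the first K of them; by (i) that span is everything, so `(S, w₀)` is controllable. -/

open Matrix

open Polynomial in
theorem Matrix.pow_mulVec_mem_span_pow_mulVec {R : Type*} [CommRing R] [Nontrivial R] {K : ℕ}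
    (S : Matrix (Fin K) (Fin K) R) (w : Fin K → R) (m : ℕ) :
    S ^ m *ᵥ w ∈ Submodule.span R (Set.range fun j : Fin K => S ^ (j : ℕ) *ᵥ w) := by
  rcases Nat.eq_zero_or_pos K with rfl | hK
  · simp [Subsingleton.elim (S ^ m *ᵥ w) 0]
  have hne : S.charpoly ≠ 1 := fun h => by
    have := S.charpoly_natDegree_eq_dim
    rw [h, natDegree_one, Fintype.card_fin] at this
    omega
  have hdeg : (X ^ m %ₘ S.charpoly).natDegree < K := by
    simpa using natDegree_modByMonic_lt (X ^ m) S.charpoly_monic hne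
  rw [S.pow_eq_aeval_mod_charpoly, aeval_eq_sum_range' hdeg, sum_mulVec]
  refine Submodule.sum_mem _ fun i hi => ?_
  rw [smul_mulVec]
  exact Submodule.smul_mem _ _ (Submodule.subset_span ⟨⟨i, Finset.mem_range.mp hi⟩, rfl⟩)

def hankel {R : Type*} (u : ℕ → R) (m n : ℕ) : Matrix (Fin m) (Fin n) R :=
  of fun i j => u (i + j)

theorem exists_recurrence_of_rank_hankel_eq {R : Type*} [Field R] {u : ℕ → R} {K N : ℕ}
    (h : (hankel u K N).rank = (hankel u (K + 1) N).rank) :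
    ∃ a : Fin K → R, ∀ j < N, u (K + j) = a ⬝ᵥ fun i => u (i + j) := by
  have hle : Submodule.span R (Set.range (hankel u K N).row) ≤
      Submodule.span R (Set.range (hankel u (K + 1) N).row) :=
    Submodule.span_mono fun _ ⟨i, hi⟩ => ⟨i.castSucc, hi⟩
  have heq := Submodule.eq_of_le_of_finrank_eq hle <| by
    rwa [← rank_eq_finrank_span_row, ← rank_eq_finrank_span_row]
  have hlast : hankel u (K + 1) N (Fin.last K) ∈ Submodule.span R (Set.range (hankel u K N).row) :=
    heq ▸ Submodule.subset_span ⟨Fin.last K, rfl⟩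
  obtain ⟨a, ha⟩ := (Submodule.mem_span_range_iff_exists_fun R).mp hlast
  refine ⟨a, fun j hj => ?_⟩
  have := congrFun ha ⟨j, hj⟩
  simp only [Finset.sum_apply, Pi.smul_apply, smul_eq_mul, hankel, of_apply] at this
  exact this.symm

def firstCoord (R : Type*) [Zero R] [One R] (K : ℕ) : Matrix (Fin 1) (Fin K) R :=
  of fun _ j => if (j : ℕ) = 0 then 1 else 0

section Companion

variable {R : Type*} [CommRing R] {K : ℕ}

def companion (a : Fin K → R) : Matrix (Fin K) (Fin K) R :=
  of fun i => if h : (i : ℕ) + 1 < K then Pi.single ⟨i + 1, h⟩ 1 else a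

theorem companion_mulVec_shift {a : Fin K → R} {u : ℕ → R} {t : ℕ}
    (ht : u (K + t) = a ⬝ᵥ fun i => u (i + t)) :
    companion a *ᵥ (fun i : Fin K => u (i + t)) = fun i : Fin K => u (i + (t + 1)) := by
  funext i
  by_cases hi : (i : ℕ) + 1 < K
  · simp only [mulVec, companion, of_apply, dif_pos hi, single_dotProduct, one_mul]
    ring_nf
  · simp only [mulVec, companion, of_apply, dif_neg hi]
    rw [← ht]
    congr 1
    omega

theorem companion_pow_mulVec {a : Fin K → R} {u : ℕ → R} {N : ℕ}
    (hrec : ∀ j < N, u (K + j) = a ⬝ᵥ fun i => u (i + j)) {t : ℕ} (ht : t ≤ N) :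
    companion a ^ t *ᵥ (fun i : Fin K => u i) = fun i : Fin K => u (i + t) := by
  induction t with
  | zero => simp
  | succ t ih =>
    rw [pow_succ', ← mulVec_mulVec, ih (by omega), companion_mulVec_shift (hrec t (by omega))]

theorem firstCoord_mul_companion_pow (a : Fin K → R) {i : ℕ} (hi : i < K) :
    (firstCoord R K * companion a ^ i) 0 = Pi.single ⟨i, hi⟩ 1 := by
  induction i with
  | zero =>
    funext j
    simp [firstCoord, Pi.single_apply, Fin.ext_iff]
  | succ i ih =>
    rw [pow_succ, ← Matrix.mul_assoc]
    change (firstCoord R K * companion a ^ i) 0 ᵥ* companion a = _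
    rw [ih (by omega), single_one_vecMul]
    simp [companion, hi]

theorem isUnit_observability_companion (a : Fin K → R) :
    IsUnit (of fun (i : Fin K) (j : Fin K) => (firstCoord R K * companion a ^ (i : ℕ)) 0 j) := by
  convert isUnit_one (M := Matrix (Fin K) (Fin K) R) using 1
  ext i j
  simp [firstCoord_mul_companion_pow a i.isLt, Pi.single_apply, one_apply, eq_comm]

theorem firstCoord_mul_companion_pow_mulVec {a : Fin K → R} {u : ℕ → R} {N : ℕ}
    (hrec : ∀ j < N, u (K + j) = a ⬝ᵥ fun i => u (i + j)) {i s : ℕ} (hi : i < K) (hs : s ≤ N) :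
    ((firstCoord R K * companion a ^ (i + s)) *ᵥ fun k : Fin K => u k) 0 = u (i + s) := by
  rw [pow_add, ← Matrix.mul_assoc, ← mulVec_mulVec, companion_pow_mulVec hrec hs]
  change (firstCoord R K * companion a ^ i) 0 ⬝ᵥ _ = _
  rw [firstCoord_mul_companion_pow a hi, single_dotProduct, one_mul]

end Companion

theorem Matrix.isUnit_controllability_of_rank_eq {R : Type*} [Field R] {K n : ℕ}
    (S : Matrix (Fin K) (Fin K) R) (w : Fin K → R) (H : Matrix (Fin K) (Fin n) R)
    (hH : H.rank = K) (hcol : ∀ j, ∃ m : ℕ, H.col j = S ^ m *ᵥ w) :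
    IsUnit (of fun (i : Fin K) (j : Fin K) => (S ^ (j : ℕ) *ᵥ w) i) := by
  set C : Matrix (Fin K) (Fin K) R := of fun i j => (S ^ (j : ℕ) *ᵥ w) i
  have hle : Submodule.span R (Set.range H.col) ≤ Submodule.span R (Set.range C.col) := by
    rw [Submodule.span_le]
    rintro _ ⟨j, rfl⟩
    obtain ⟨m, hm⟩ := hcol j
    exact hm ▸ S.pow_mulVec_mem_span_pow_mulVec w m
  have htop : Submodule.span R (Set.range C.col) = ⊤ := by
    refine Submodule.eq_top_of_finrank_eq (le_antisymm (Submodule.finrank_le _) ?_)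
    calc Module.finrank R (Fin K → R) = H.rank := by simp [hH]
      _ ≤ _ := H.rank_eq_finrank_span_cols ▸ Submodule.finrank_mono hle
  rw [← mulVec_surjective_iff_isUnit, ← coe_mulVecLin, ← LinearMap.range_eq_top,
    range_mulVecLin, htop]

theorem stmt_3_general (K T : ℕ) (hK : 1 ≤ K) (u : ℕ → ℝ)
    (h1 : (Matrix.of fun (i : Fin K) (j : Fin (T - K + 1)) => u ((i : ℕ) + (j : ℕ))).rank = K)
    (h2 : (Matrix.of fun (i : Fin K) (j : Fin (T - K)) => u ((i : ℕ) + (j : ℕ))).rank =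
          (Matrix.of fun (i : Fin (K + 1)) (j : Fin (T - K)) => u ((i : ℕ) + (j : ℕ))).rank) :
    ∃ (Sg : Matrix (Fin K) (Fin K) ℝ) (Lg : Matrix (Fin 1) (Fin K) ℝ) (w0 : Fin K → ℝ),
      IsUnit (Matrix.of fun (i : Fin K) (j : Fin K) => (Lg * Sg ^ (i : ℕ)) 0 j) ∧
      IsUnit (Matrix.of fun (i : Fin K) (j : Fin K) => ((Sg ^ (j : ℕ)) *ᵥ w0) i) ∧
      ∀ t : ℕ, t ≤ T - 1 → u t = ((Lg * Sg ^ t) *ᵥ w0) 0 := by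
  obtain ⟨a, hrec⟩ := exists_recurrence_of_rank_hankel_eq (u := u) h2
  refine ⟨companion a, firstCoord ℝ K, fun i => u i, isUnit_observability_companion a,
    isUnit_controllability_of_rank_eq _ _ (hankel u K (T - K + 1)) h1
      fun j => ⟨j, (companion_pow_mulVec hrec (by omega)).symm⟩, fun t ht => ?_⟩
  -- write `t = i + s` with `i < K` and `s ≤ T - K`, where the recurrence is available
  have hsplit := firstCoord_mul_companion_pow_mulVec hrec (i := t - min t (T - K))
    (by omega) (min_le_right t (T - K))
  rwa [Nat.sub_add_cancel (min_le_left _ _), eq_comm] at hsplit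

/-- a sequence whose depth-K Hankel matrix has rank K, and whose
depth-K Hankel matrix of the first T-1 samples has the same rank as the
depth-(K+1) Hankel matrix of all T samples, is the response of a K-dimensional
observable and reachable signal generator. -/
theorem stmt_3 (K T : ℕ) (hK : 1 ≤ K) (hT : 2 * K - 1 ≤ T) (u : ℕ → ℝ)
    (h1 : (Matrix.of fun (i : Fin K) (j : Fin (T - K + 1)) => u ((i : ℕ) + (j : ℕ))).rank = K)
    (h2 : (Matrix.of fun (i : Fin K) (j : Fin (T - K)) => u ((i : ℕ) + (j : ℕ))).rank =
          (Matrix.of fun (i : Fin (K + 1)) (j : Fin (T - K)) => u ((i : ℕ) + (j : ℕ))).rank) :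
    ∃ (Sg : Matrix (Fin K) (Fin K) ℝ) (Lg : Matrix (Fin 1) (Fin K) ℝ) (w0 : Fin K → ℝ),
      IsUnit (Matrix.of fun (i : Fin K) (j : Fin K) => (Lg * Sg ^ (i : ℕ)) 0 j) ∧
      IsUnit (Matrix.of fun (i : Fin K) (j : Fin K) => ((Sg ^ (j : ℕ)) *ᵥ w0) i) ∧
      ∀ t : ℕ, t ≤ T - 1 → u t = ((Lg * Sg ^ t) *ᵥ w0) 0 :=
  stmt_3_general K T hK u h1 h2
end

section
/- Let A ∈ ℝ^{n×n}, B ∈ ℝ^{n×1} with (A,B) controllable, L_g ∈ ℝ^{1×N_g}, S_g ∈ ℝ^{N_g×N_g} with (L_g,S_g) observable and σ(A)∩σ(S_g)=∅. Then the unique solution Π of AΠ + B L_g = Π S_g satisfies rank(Π) = min{n, N_g}. -/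
/-!
Multiplying the Sylvester equation `A P + B L = P S` on the right by `χ_A(S)`, where `χ_A` is the
characteristic polynomial of `A`, and using `χ_A(A) = 0` gives the factorization
`P χ_A(S) = C H O`: `C` is the controllability matrix of `(A, B)`, `H = (a_{i+j+1})` is the Hankel
matrix of the coefficients of `χ_A`, anti-triangular with ones on the anti-diagonal, and `O` is the
observability matrix of `(L, S)` with `n` rows. By the spectral mapping theorem `χ_A(S)` is
invertible when `σ(A) ∩ σ(S) = ∅`, and `C` is invertible by controllability, so
`rank P = rank O`; by observability the first `min n N` rows of `O` are independent.
-/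

open Matrix Polynomial

theorem Finset.sum_range_sum_range_tsub_eq_sum_range_sum_range {M : Type*} [AddCommMonoid M]
    (N : ℕ) (g : ℕ → ℕ → M) (hg : ∀ j l, N < j + l + 1 → g j l = 0) :
    ∑ k ∈ range (N + 1), ∑ i ∈ range k, g (k - 1 - i) i
      = ∑ j ∈ range N, ∑ l ∈ range N, g j l := by
  have hshrink : ∀ j ∈ range N, ∑ l ∈ range N, g j l = ∑ l ∈ range (N - j), g j l := by
    intro j _
    refine (sum_subset (range_subset_range.2 (by omega)) fun l hl hl' => hg j l ?_).symm
    simp only [mem_range] at hl hl'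
    omega
  rw [sum_congr rfl hshrink, sum_sigma', sum_sigma']
  refine sum_nbij' (fun x => ⟨x.1 - 1 - x.2, x.2⟩) (fun x => ⟨x.1 + x.2 + 1, x.2⟩)
    ?_ ?_ ?_ ?_ ?_ <;> rintro ⟨a, b⟩ h <;> simp only [mem_sigma, mem_range] at h ⊢
  all_goals first | omega | (simp only [Sigma.mk.inj_iff, heq_eq_eq, and_true]; omega)

namespace Matrix

variable {R : Type*} [CommRing R] {l m : Type*} [Fintype l] [Fintype m]

def ctrbMatrix {n : ℕ} (A : Matrix (Fin n) (Fin n) R) (B : Matrix (Fin n) (Fin 1) R) :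
    Matrix (Fin n) (Fin n) R :=
  of fun i j => (A ^ (j : ℕ) * B) i 0

def obsvMatrix [DecidableEq m] (N : ℕ) (L : Matrix (Fin 1) m R) (S : Matrix m m R) :
    Matrix (Fin N) m R :=
  of fun i j => (L * S ^ (i : ℕ)) 0 j

def coeffHankel (p : R[X]) (N : ℕ) : Matrix (Fin N) (Fin N) R :=
  of fun i j => p.coeff (i + j + 1)

theorem isUnit_coeffHankel {p : R[X]} {N : ℕ} (hp : p.Monic) (hdeg : p.natDegree = N) :
    IsUnit (coeffHankel p N) := by
  -- reversing the columns gives an upper triangular matrix with diagonal `p.leadingCoeff = 1`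
  set H := (coeffHankel p N).submatrix id Fin.revPerm
  have htri : H.IsUpperTriangular := by
    intro i j hji
    have : p.natDegree < i + (N - (j + 1)) + 1 := by
      have : (j : ℕ) < i := hji
      omega
    simpa [H, coeffHankel, Fin.val_rev] using coeff_eq_zero_of_natDegree_lt this
  have hdet : H.det = 1 := by
    rw [det_of_isUpperTriangular htri]
    refine Finset.prod_eq_one fun i _ => ?_
    have : (i : ℕ) + (N - (i + 1)) + 1 = p.natDegree := by omega
    simpa [H, coeffHankel, Fin.val_rev, this] using hp.coeff_natDegree
  rw [isUnit_iff_isUnit_det]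
  refine IsUnit.of_mul_eq_one_right (Equiv.Perm.sign (Fin.revPerm (n := N)) : R) ?_
  rw [← hdet, det_permute']

section Sylvester

variable [DecidableEq l] [DecidableEq m] {A : Matrix l l R} {S : Matrix m m R} {P Q : Matrix l m R}

theorem mul_pow_sub_pow_mul_of_sylvester (hP : A * P + Q = P * S) (k : ℕ) :
    P * S ^ k - A ^ k * P = ∑ i ∈ Finset.range k, A ^ (k - 1 - i) * Q * S ^ i := by
  induction k with
  | zero => simp
  | succ k ih =>
    calc P * S ^ (k + 1) - A ^ (k + 1) * P
        = (P * S ^ k - A ^ k * P) * S + A ^ k * (P * S - A * P) := by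
          simp only [pow_succ, Matrix.mul_sub, Matrix.sub_mul, Matrix.mul_assoc]
          abel
      _ = ∑ i ∈ Finset.range (k + 1), A ^ (k + 1 - 1 - i) * Q * S ^ i := by
          rw [ih, ← hP, add_sub_cancel_left, Finset.sum_range_succ', Matrix.sum_mul]
          simp [Matrix.mul_assoc, ← pow_succ, Nat.sub_sub, Nat.add_comm 1]

theorem mul_aeval_sub_aeval_mul_of_sylvester (hP : A * P + Q = P * S) {p : R[X]} {N : ℕ}
    (hp : p.natDegree ≤ N) :
    P * aeval S p - aeval A p * P
      = ∑ j ∈ Finset.range N, ∑ i ∈ Finset.range N,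
          p.coeff (j + i + 1) • (A ^ j * Q * S ^ i) := by
  have hlt : p.natDegree < N + 1 := Nat.lt_succ_of_le hp
  rw [aeval_eq_sum_range' hlt, aeval_eq_sum_range' hlt, Matrix.mul_sum, Matrix.sum_mul,
    ← Finset.sum_sub_distrib,
    ← Finset.sum_range_sum_range_tsub_eq_sum_range_sum_range N _ fun j i hji => by
      rw [coeff_eq_zero_of_natDegree_lt (by omega), zero_smul]]
  refine Finset.sum_congr rfl fun k _ => ?_
  rw [Matrix.mul_smul, Matrix.smul_mul, ← smul_sub, mul_pow_sub_pow_mul_of_sylvester hP,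
    Finset.smul_sum]
  refine Finset.sum_congr rfl fun i hi => ?_
  rw [show k - 1 - i + i + 1 = k by rw [Finset.mem_range] at hi; omega]

end Sylvester

theorem ctrbMatrix_mul_coeffHankel_mul_obsvMatrix {n : ℕ} [DecidableEq m]
    (A : Matrix (Fin n) (Fin n) R) (B : Matrix (Fin n) (Fin 1) R) (L : Matrix (Fin 1) m R)
    (S : Matrix m m R) (p : R[X]) :
    ctrbMatrix A B * (coeffHankel p n * obsvMatrix n L S)
      = ∑ j ∈ Finset.range n, ∑ i ∈ Finset.range n,
          p.coeff (j + i + 1) • (A ^ j * (B * L) * S ^ i) := by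
  simp only [Finset.sum_range]
  ext r c
  simp only [sum_apply, smul_apply, mul_apply, Finset.mul_sum, ctrbMatrix, coeffHankel,
    obsvMatrix, of_apply, Fin.sum_univ_one, smul_eq_mul]
  refine Finset.sum_congr rfl fun j _ => Finset.sum_congr rfl fun i _ =>
    Finset.sum_congr rfl fun k _ => ?_
  simp only [Finset.sum_mul, Finset.mul_sum]
  exact Finset.sum_congr rfl fun _ _ => by ring

theorem mul_aeval_charpoly_eq_of_sylvester {n : ℕ} [DecidableEq m]
    {A : Matrix (Fin n) (Fin n) R} {B : Matrix (Fin n) (Fin 1) R} {L : Matrix (Fin 1) m R}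
    {S : Matrix m m R} {P : Matrix (Fin n) m R} (hP : A * P + B * L = P * S) :
    P * aeval S A.charpoly = ctrbMatrix A B * (coeffHankel A.charpoly n * obsvMatrix n L S) := by
  nontriviality R
  have h := mul_aeval_sub_aeval_mul_of_sylvester hP (p := A.charpoly) (N := n)
    (by rw [charpoly_natDegree_eq_dim, Fintype.card_fin])
  rwa [aeval_self_charpoly, Matrix.zero_mul, sub_zero,
    ← ctrbMatrix_mul_coeffHankel_mul_obsvMatrix] at h

theorem isUnit_aeval_charpoly_of_disjoint_spectrum {K : Type*} [Field K] [IsAlgClosed K]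
    [DecidableEq l] [DecidableEq m] {A : Matrix l l K} {S : Matrix m m K}
    (h : Disjoint (spectrum K A) (spectrum K S)) : IsUnit (aeval S A.charpoly) := by
  rcases le_or_gt A.charpoly.degree 0 with hdeg | hdeg
  · rw [A.charpoly_monic.degree_le_zero_iff_eq_one.mp hdeg, map_one]
    exact isUnit_one
  · rw [← spectrum.zero_notMem_iff K, spectrum.map_polynomial_aeval_of_degree_pos S _ hdeg]
    rintro ⟨μ, hμS, hμ⟩
    exact h.ne_of_mem (mem_spectrum_iff_isRoot_charpoly.mpr hμ) hμS rfl

theorem isUnit_aeval_charpoly_of_disjoint_spectrum_map {K L : Type*} [Field K] [Field L]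
    [IsAlgClosed L] [Algebra K L] [DecidableEq l] [DecidableEq m] {A : Matrix l l K}
    {S : Matrix m m K}
    (h : Disjoint (spectrum L (A.map (algebraMap K L))) (spectrum L (S.map (algebraMap K L)))) :
    IsUnit (aeval S A.charpoly) := by
  have hmap : (Algebra.ofId K L).mapMatrix (aeval S A.charpoly)
      = aeval (S.map (algebraMap K L)) (A.map (algebraMap K L)).charpoly := by
    rw [charpoly_map, aeval_map_algebraMap, ← aeval_algHom_apply]
    rfl
  have hL := isUnit_aeval_charpoly_of_disjoint_spectrum h
  rw [← hmap, isUnit_iff_isUnit_det, ← AlgHom.map_det] at hL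
  rw [isUnit_iff_isUnit_det]
  exact (isUnit_map_iff _ _).mp hL

theorem isUnit_of_rank_eq_card {K : Type*} [Field K] [DecidableEq l] {M : Matrix l l K}
    (h : M.rank = Fintype.card l) : IsUnit M := by
  rw [← linearIndependent_rows_iff_isUnit, linearIndependent_iff_card_eq_finrank_span,
    Set.finrank, ← rank_eq_finrank_span_row, h]

theorem rank_obsvMatrix_of_isUnit {K : Type*} [Field K] {N : ℕ} {L : Matrix (Fin 1) (Fin N) K}
    {S : Matrix (Fin N) (Fin N) K} (h : IsUnit (obsvMatrix N L S)) (k : ℕ) :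
    (obsvMatrix k L S).rank = min k N := by
  have hsub {a b : ℕ} (hab : a ≤ b) :
      (obsvMatrix b L S).submatrix (Fin.castLE hab) id = obsvMatrix a L S := rfl
  have hli : LinearIndependent K (obsvMatrix (min k N) L S).row := by
    rw [← hsub (min_le_right k N)]
    exact (linearIndependent_rows_iff_isUnit.mpr h).comp _ (Fin.castLE_injective _)
  refine le_antisymm (le_min (rank_le_height _) (rank_le_width _)) ?_
  calc min k N = (obsvMatrix (min k N) L S).rank := by rw [hli.rank_matrix, Fintype.card_fin]
    _ ≤ (obsvMatrix k L S).rank := hsub (min_le_left k N) ▸ rank_submatrix_le _ _ _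

end Matrix

/-- with (A,B) controllable, (L_g,S_g) observable and disjoint spectra,
the solution of the Sylvester equation AΠ + BL_g = ΠS_g has rank min{n,N_g}. -/
theorem stmt_8 (n Ng : ℕ) (A : Matrix (Fin n) (Fin n) ℝ) (B : Matrix (Fin n) (Fin 1) ℝ)
    (Lg : Matrix (Fin 1) (Fin Ng) ℝ) (Sg : Matrix (Fin Ng) (Fin Ng) ℝ)
    (hctrb : (Matrix.of fun (i : Fin n) (j : Fin n) => ((A ^ (j : ℕ)) * B) i 0).rank = n)
    (hobs : IsUnit (Matrix.of fun (i : Fin Ng) (j : Fin Ng) => (Lg * Sg ^ (i : ℕ)) 0 j))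
    (hspec : Disjoint (spectrum ℂ (A.map (fun a => (a : ℂ))))
      (spectrum ℂ (Sg.map (fun a => (a : ℂ)))))
    (P : Matrix (Fin n) (Fin Ng) ℝ) (hP : A * P + B * Lg = P * Sg) :
    P.rank = min n Ng := by
  have hC : IsUnit (ctrbMatrix A B) := isUnit_of_rank_eq_card (by rwa [Fintype.card_fin])
  have hH : IsUnit (coeffHankel A.charpoly n) :=
    isUnit_coeffHankel A.charpoly_monic (by rw [charpoly_natDegree_eq_dim, Fintype.card_fin])
  have hχ : IsUnit (aeval Sg A.charpoly) := isUnit_aeval_charpoly_of_disjoint_spectrum_map hspec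
  rw [isUnit_iff_isUnit_det] at hC hH hχ
  calc P.rank = (P * aeval Sg A.charpoly).rank := (rank_mul_eq_left_of_isUnit_det _ P hχ).symm
    _ = (obsvMatrix n Lg Sg).rank := by
      rw [mul_aeval_charpoly_eq_of_sylvester hP, rank_mul_eq_right_of_isUnit_det _ _ hC,
        rank_mul_eq_right_of_isUnit_det _ _ hH]
    _ = min n Ng := rank_obsvMatrix_of_isUnit hobs n
end

section
/- Let A ∈ ℝ^{n×n}, B ∈ ℝ^{n×1}, C ∈ ℝ^{1×n}, D ∈ ℝ, S_g ∈ ℝ^{N_g×N_g}, L_g ∈ ℝ^{1×N_g}, and suppose Π solves AΠ + B L_g = Π S_g. Set M_g = CΠ + D L_g. Then for every L ≥ 1, the L-step observability matrix of (M_g, S_g) satisfies O_L(M_g,S_g) = T_L · O_L(L_g,S_g) + O_L(C,A) · Π, where T_L is the L×L lower-triangular Toeplitz matrix of Markov parameters: (T_L)_{i,i} = D and (T_L)_{i,j} = C A^{i-j-1} B for i > j (and 0 for i < j). -/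
open Matrix

private lemma key_sylv {n Ng : ℕ}
    (A : Matrix (Fin n) (Fin n) ℝ) (B : Matrix (Fin n) (Fin 1) ℝ)
    (Sg : Matrix (Fin Ng) (Fin Ng) ℝ) (Lg : Matrix (Fin 1) (Fin Ng) ℝ)
    (P : Matrix (Fin n) (Fin Ng) ℝ) (hP : A * P + B * Lg = P * Sg) (k : ℕ) :
    P * Sg ^ k = A ^ k * P + ∑ j ∈ Finset.range k, A ^ (k - 1 - j) * B * Lg * Sg ^ j := by
  induction k with
  | zero => simp
  | succ k ih =>
    have h0 : P * Sg ^ (k + 1) = (P * Sg ^ k) * Sg := by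
      rw [pow_succ, Matrix.mul_assoc]
    rw [h0, ih, Matrix.add_mul]
    simp only [Matrix.sum_mul]
    have h1 : A ^ k * P * Sg = A ^ (k + 1) * P + A ^ k * B * Lg := by
      rw [Matrix.mul_assoc, ← hP, Matrix.mul_add, pow_succ, Matrix.mul_assoc,
        ← Matrix.mul_assoc (A ^ k) B Lg]
    rw [h1]
    rw [Finset.sum_range_succ' (fun j => A ^ (k + 1 - 1 - j) * B * Lg * Sg ^ j) k]
    have h2 : ∀ j ∈ Finset.range k, A ^ (k - 1 - j) * B * Lg * Sg ^ j * Sg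
        = A ^ (k + 1 - 1 - (j + 1)) * B * Lg * Sg ^ (j + 1) := by
      intro j hj
      have : k + 1 - 1 - (j + 1) = k - 1 - j := by omega
      rw [this, pow_succ, Matrix.mul_assoc]
    rw [Finset.sum_congr rfl h2]
    simp [add_assoc, add_comm]
    abel

/-- with M_g = CΠ + D L_g and Π solving the Sylvester equation,
O_L(M_g,S_g) = T_L · O_L(L_g,S_g) + O_L(C,A) · Π, where T_L is the lower-triangular
Toeplitz matrix of Markov parameters. -/
theorem stmt_10 (n Ng L : ℕ) (hL : 1 ≤ L)
    (A : Matrix (Fin n) (Fin n) ℝ) (B : Matrix (Fin n) (Fin 1) ℝ)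
    (C : Matrix (Fin 1) (Fin n) ℝ) (D : ℝ)
    (Sg : Matrix (Fin Ng) (Fin Ng) ℝ) (Lg : Matrix (Fin 1) (Fin Ng) ℝ)
    (P : Matrix (Fin n) (Fin Ng) ℝ) (hP : A * P + B * Lg = P * Sg) :
    (Matrix.of fun (i : Fin L) (j : Fin Ng) => ((C * P + D • Lg) * Sg ^ (i : ℕ)) 0 j) =
      (Matrix.of fun (i j : Fin L) =>
          if (i : ℕ) = (j : ℕ) then D
          else if (j : ℕ) < (i : ℕ) then (C * A ^ ((i : ℕ) - (j : ℕ) - 1) * B) 0 0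
          else 0) *
        (Matrix.of fun (i : Fin L) (j : Fin Ng) => (Lg * Sg ^ (i : ℕ)) 0 j) +
      (Matrix.of fun (i : Fin L) (j : Fin n) => (C * A ^ (i : ℕ)) 0 j) * P := by
  ext i c
  -- LHS expansion
  have hkey := key_sylv A B Sg Lg P hP (i : ℕ)
  have hLHS : (C * P + D • Lg) * Sg ^ (i : ℕ)
      = C * A ^ (i : ℕ) * P
        + (∑ j ∈ Finset.range (i : ℕ),
            (C * A ^ ((i : ℕ) - 1 - j) * B) * (Lg * Sg ^ j))
        + D • (Lg * Sg ^ (i : ℕ)) := by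
    rw [Matrix.add_mul, Matrix.smul_mul, Matrix.mul_assoc C P, hkey,
      Matrix.mul_add, Matrix.mul_sum]
    congr 2
    · rw [Matrix.mul_assoc]
    · refine Finset.sum_congr rfl fun j hj => ?_
      simp only [Matrix.mul_assoc]
  -- RHS: the Fin L sum
  set f : ℕ → ℝ := fun j =>
    (if (i : ℕ) = j then D
     else if j < (i : ℕ) then (C * A ^ ((i : ℕ) - j - 1) * B) 0 0 else 0)
    * (Lg * Sg ^ j) 0 c with hf
  have hsum : (∑ j : Fin L, f (j : ℕ)) = ∑ j ∈ Finset.range L, f j :=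
    Fin.sum_univ_eq_sum_range f L
  have hrestrict : ∑ j ∈ Finset.range L, f j = ∑ j ∈ Finset.range ((i : ℕ) + 1), f j := by
    refine (Finset.sum_subset (by simp [Finset.range_subset]; omega) fun j hj hj' => ?_).symm
    have : (i : ℕ) < j := by simp [Finset.mem_range] at hj hj' ⊢; omega
    simp [hf, Nat.ne_of_lt this, Nat.not_lt_of_lt this, not_lt_of_gt this]
  have hsplit : ∑ j ∈ Finset.range ((i : ℕ) + 1), f j
      = (∑ j ∈ Finset.range (i : ℕ),
          (C * A ^ ((i : ℕ) - 1 - j) * B) 0 0 * (Lg * Sg ^ j) 0 c)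
        + D * (Lg * Sg ^ (i : ℕ)) 0 c := by
    rw [Finset.sum_range_succ]
    congr 1
    · refine Finset.sum_congr rfl fun j hj => ?_
      have hjlt : j < (i : ℕ) := Finset.mem_range.mp hj
      have : (i : ℕ) - j - 1 = (i : ℕ) - 1 - j := by omega
      simp [hf, Nat.ne_of_gt hjlt, hjlt, this]
    · simp [hf]
  have hTO : ((Matrix.of fun (i j : Fin L) =>
          if (i : ℕ) = (j : ℕ) then D
          else if (j : ℕ) < (i : ℕ) then (C * A ^ ((i : ℕ) - (j : ℕ) - 1) * B) 0 0
          else 0) *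
        (Matrix.of fun (i : Fin L) (j : Fin Ng) => (Lg * Sg ^ (i : ℕ)) 0 j)) i c
      = ∑ j : Fin L, f (j : ℕ) := by
    rw [Matrix.mul_apply]
    simp only [Matrix.of_apply, hf]
  have hOP : ((Matrix.of fun (i : Fin L) (j : Fin n) => (C * A ^ (i : ℕ)) 0 j) * P) i c
      = (C * A ^ (i : ℕ) * P) 0 c := by
    rw [Matrix.mul_apply, Matrix.mul_apply]
    simp only [Matrix.of_apply]
  have hsum2 : (∑ j ∈ Finset.range (i : ℕ),
        (C * A ^ ((i : ℕ) - 1 - j) * B) * (Lg * Sg ^ j)) 0 c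
      = ∑ j ∈ Finset.range (i : ℕ),
        (C * A ^ ((i : ℕ) - 1 - j) * B) 0 0 * (Lg * Sg ^ j) 0 c := by
    rw [Matrix.sum_apply]
    refine Finset.sum_congr rfl fun j hj => ?_
    rw [Matrix.mul_apply, Fin.sum_univ_one]
  simp only [Matrix.of_apply, Matrix.add_apply]
  rw [hTO, hOP, hsum, hrestrict, hsplit, hLHS, Matrix.add_apply, Matrix.add_apply,
    Matrix.smul_apply, smul_eq_mul, hsum2]
  ring
end

section
/- Let S_g ∈ ℝ^{N_g×N_g}, w_0 ∈ ℝ^{N_g} with (S_g, w_0) controllable, and A ∈ ℝ^{n×n}, x̄_0 ∈ ℝ^n, with σ(S_g) ∩ σ(A) = ∅. Then the left kernel of the (N_g+n)-step controllability matrix of the block pair (diag(S_g, A), (w_0, x̄_0)) equals {(0, v) : v ∈ ℝ^n, vᵀ [x̄_0, A x̄_0, ..., A^{n-1} x̄_0] = 0}. -/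
/-!
Write `z = (u, v)` and let `φ_u p = uᵀ p(S) w₀`, `ψ_v p = vᵀ p(A) x̄₀` (these are `krylovForm`).
Then `z` lies in the left kernel of the `k`-step controllability matrix of the block pair iff `φ_u + ψ_v` vanishes on all
polynomials of degree `< k`. For `k = N + n` and `deg p < N`, the test polynomial `χ_A p` kills
`ψ_v` (Cayley–Hamilton), so `uᵀ χ_A(S)` is orthogonal to the controllability matrix of `(S, w₀)` and
hence zero. The spectra being disjoint, `χ_S` and `χ_A` are coprime, so `χ_A(S)` is invertible and
`u = 0`. Conversely, by Cayley–Hamilton a form `ψ_v` vanishing in degrees `< n` vanishes everywhere.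
-/

open Matrix Polynomial

lemma Polynomial.map_eq_zero_of_mem_degreeLT {R N : Type*} [Semiring R] [AddCommMonoid N]
    [Module R N] {k : ℕ} (f : R[X] →ₗ[R] N) (hf : ∀ j < k, f (X ^ j) = 0) {p : R[X]}
    (hp : p ∈ degreeLT R k) : f p = 0 := by
  classical
  rw [degreeLT_eq_span_X_pow] at hp
  refine (Submodule.span_le (p := LinearMap.ker f)).mpr ?_ hp
  simp only [Finset.coe_image, Finset.coe_range, Set.image_subset_iff]
  exact hf

namespace Matrix

section CommRing

variable {R : Type*} [CommRing R] {m n : Type*} [Fintype m] [Fintype n] [DecidableEq m]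
  [DecidableEq n]

def controllabilityMatrix (M : Matrix m m R) (b : m → R) (k : ℕ) : Matrix m (Fin k) R :=
  of fun i j => (M ^ (j : ℕ) *ᵥ b) i

noncomputable def krylovForm (M : Matrix m m R) (b v : m → R) : R[X] →ₗ[R] R where
  toFun p := v ⬝ᵥ (aeval M p *ᵥ b)
  map_add' p q := by simp only [map_add, add_mulVec, dotProduct_add]
  map_smul' c p := by simp only [map_smul, smul_mulVec, dotProduct_smul, RingHom.id_apply]

@[simp]
lemma krylovForm_apply (M : Matrix m m R) (b v : m → R) (p : R[X]) :
    krylovForm M b v p = v ⬝ᵥ (aeval M p *ᵥ b) := rfl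

@[simp]
lemma krylovForm_zero_left (M : Matrix m m R) (b : m → R) : krylovForm M b 0 = 0 := by
  ext; simp

lemma krylovForm_mul (M : Matrix m m R) (b v : m → R) (p q : R[X]) :
    krylovForm M b v (q * p) = krylovForm M b (v ᵥ* aeval M q) p := by
  simp only [krylovForm_apply, map_mul, ← mulVec_mulVec, dotProduct_mulVec]

lemma krylovForm_modByMonic_charpoly (M : Matrix m m R) (b v : m → R) (p : R[X]) :
    krylovForm M b v (p %ₘ M.charpoly) = krylovForm M b v p := by
  simp only [krylovForm_apply, aeval_modByMonic_eq_self_of_root M.aeval_self_charpoly]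

lemma krylovForm_fromBlocks (S : Matrix m m R) (A : Matrix n n R) (w : m → R) (x : n → R)
    (z : m ⊕ n → R) :
    krylovForm (fromBlocks S 0 0 A) (Sum.elim w x) z =
      krylovForm S w (z ∘ Sum.inl) + krylovForm A x (z ∘ Sum.inr) := by
  ext j
  simp [fromBlocks_diagonal_pow, fromBlocks_mulVec, dotProduct, Fintype.sum_sum_type]

lemma vecMul_controllabilityMatrix_eq_zero_iff (M : Matrix m m R) (b v : m → R) (k : ℕ) :
    v ᵥ* controllabilityMatrix M b k = 0 ↔ ∀ p ∈ degreeLT R k, krylovForm M b v p = 0 := by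
  refine ⟨fun h p hp => Polynomial.map_eq_zero_of_mem_degreeLT _ (fun j hj => ?_) hp, fun h => ?_⟩
  · simpa [vecMul, controllabilityMatrix, dotProduct_comm] using congrFun h ⟨j, hj⟩
  · ext j
    simpa [vecMul, controllabilityMatrix, dotProduct_comm] using
      h (X ^ (j : ℕ)) (mem_degreeLT.mpr ((degree_X_pow_le _).trans_lt (by exact_mod_cast j.isLt)))

lemma krylovForm_eq_zero_of_card_le (M : Matrix m m R) (b v : m → R) {k : ℕ}
    (hk : Fintype.card m ≤ k) (h : ∀ p ∈ degreeLT R k, krylovForm M b v p = 0) :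
    krylovForm M b v = 0 := by
  nontriviality R
  refine LinearMap.ext fun p => ?_
  rw [← krylovForm_modByMonic_charpoly]
  refine h _ (degreeLT_mono hk (mem_degreeLT.mpr ?_))
  simpa [charpoly_degree_eq_dim] using degree_modByMonic_lt p M.charpoly_monic

lemma isUnit_aeval_of_isCoprime_charpoly {M : Matrix m m R} {p : R[X]}
    (h : IsCoprime M.charpoly p) : IsUnit (aeval M p) := by
  obtain ⟨a, b, hab⟩ := h
  have hinv : aeval M b * aeval M p = 1 := by
    simpa [M.aeval_self_charpoly] using congrArg (aeval M) hab
  exact (isUnit_iff_isUnit_det _).mpr (isUnit_det_of_left_inverse hinv)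

lemma aeval_charpoly_eq_zero_iff_mem_spectrum_map {L : Type*} [Field L] [Algebra R L]
    (M : Matrix m m R) (μ : L) :
    aeval μ M.charpoly = 0 ↔ μ ∈ spectrum L (M.map (algebraMap R L)) := by
  rw [mem_spectrum_iff_isRoot_charpoly, charpoly_map, IsRoot, eval_map_algebraMap]

end CommRing

end Matrix

namespace Matrix

section Field

variable {K : Type*} [Field K] {m n : Type*} [Fintype m] [Fintype n]

lemma eq_zero_of_vecMul_eq_zero_of_rank_eq_card {k : Type*} [Fintype k] {C : Matrix m k K}
    (hC : C.rank = Fintype.card m) {y : m → K} (hy : y ᵥ* C = 0) : y = 0 := by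
  have hrows : LinearIndependent K C.row :=
    linearIndependent_iff_card_eq_finrank_span.mpr (by rw [← hC, rank_eq_finrank_span_row]; rfl)
  exact vecMul_injective_iff.mpr hrows (by simpa using hy)

variable [DecidableEq m] [DecidableEq n]

lemma isCoprime_charpoly_of_disjoint_spectrum {L : Type*} [Field L] [IsAlgClosed L]
    [Algebra K L] {S : Matrix m m K} {A : Matrix n n K}
    (h : Disjoint (spectrum L (S.map (algebraMap K L))) (spectrum L (A.map (algebraMap K L)))) :
    IsCoprime S.charpoly A.charpoly := by
  rw [isCoprime_iff_aeval_ne_zero_of_isAlgClosed K L]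
  intro μ
  rw [Ne, Ne, aeval_charpoly_eq_zero_iff_mem_spectrum_map,
    aeval_charpoly_eq_zero_iff_mem_spectrum_map, ← not_and_or]
  exact fun hμ => Set.disjoint_left.mp h hμ.1 hμ.2

lemma eq_zero_of_forall_mem_degreeLT_krylovForm_add {S : Matrix m m K} {A : Matrix n n K}
    {w : m → K} {x : n → K} {k : ℕ} (hctrb : (controllabilityMatrix S w k).rank = Fintype.card m)
    (hcop : IsCoprime S.charpoly A.charpoly) {u : m → K} {v : n → K}
    (h : ∀ p ∈ degreeLT K (k + Fintype.card n), krylovForm S w u p + krylovForm A x v p = 0) :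
    u = 0 := by
  have hq : u ᵥ* aeval S A.charpoly = 0 := by
    refine eq_zero_of_vecMul_eq_zero_of_rank_eq_card hctrb
      ((vecMul_controllabilityMatrix_eq_zero_iff _ _ _ _).mpr fun p hp => ?_)
    have hqp : A.charpoly * p ∈ degreeLT K (k + Fintype.card n) := by
      rw [mem_degreeLT] at hp ⊢
      rw [degree_mul, charpoly_degree_eq_dim, add_comm, Nat.cast_add]
      exact WithBot.add_lt_add_right WithBot.coe_ne_bot hp
    have hA : krylovForm A x v (A.charpoly * p) = 0 := by
      simp [A.aeval_self_charpoly]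
    rw [← krylovForm_mul]
    simpa [hA] using h _ hqp
  exact vecMul_injective_iff_isUnit.mpr (isUnit_aeval_of_isCoprime_charpoly hcop)
    (by simpa using hq)

end Field

end Matrix

/-- the left kernel of the (N_g+n)-step controllability matrix of the
block pair (diag(S_g,A),(w_0,x̄_0)) equals {(0,v) : vᵀ[x̄_0, Ax̄_0, ..., A^{n-1}x̄_0] = 0},
provided (S_g,w_0) is controllable and σ(S_g) ∩ σ(A) = ∅. -/
theorem stmt_13 (n Ng : ℕ)
    (Sg : Matrix (Fin Ng) (Fin Ng) ℝ) (w0 : Fin Ng → ℝ)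
    (A : Matrix (Fin n) (Fin n) ℝ) (xbar0 : Fin n → ℝ)
    (hctrb : (Matrix.of fun (i : Fin Ng) (j : Fin Ng) => ((Sg ^ (j : ℕ)) *ᵥ w0) i).rank = Ng)
    (hspec : Disjoint (spectrum ℂ (Sg.map (fun a => (a : ℂ))))
      (spectrum ℂ (A.map (fun a => (a : ℂ))))) :
    {z : (Fin Ng ⊕ Fin n) → ℝ |
        z ᵥ* (Matrix.of fun (i : Fin Ng ⊕ Fin n) (j : Fin (Ng + n)) =>
          (((Matrix.fromBlocks Sg 0 0 A) ^ (j : ℕ)) *ᵥ (Sum.elim w0 xbar0)) i) = 0} =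
      {z : (Fin Ng ⊕ Fin n) → ℝ |
        (∀ i : Fin Ng, z (Sum.inl i) = 0) ∧
        (fun i : Fin n => z (Sum.inr i)) ᵥ*
          (Matrix.of fun (i : Fin n) (j : Fin n) => ((A ^ (j : ℕ)) *ᵥ xbar0) i) = 0} := by
  have hcop : IsCoprime Sg.charpoly A.charpoly := isCoprime_charpoly_of_disjoint_spectrum hspec
  ext z
  change z ᵥ* controllabilityMatrix (fromBlocks Sg 0 0 A) (Sum.elim w0 xbar0) (Ng + n) = 0 ↔
    (∀ i, z (Sum.inl i) = 0) ∧ (z ∘ Sum.inr) ᵥ* controllabilityMatrix A xbar0 n = 0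
  simp only [vecMul_controllabilityMatrix_eq_zero_iff, krylovForm_fromBlocks, LinearMap.add_apply]
  constructor
  · intro h
    have hu : z ∘ Sum.inl = 0 := eq_zero_of_forall_mem_degreeLT_krylovForm_add
      (hctrb.trans (Fintype.card_fin Ng).symm) hcop (by simpa using h)
    refine ⟨congrFun hu, fun p hp => ?_⟩
    simpa [hu] using h p (degreeLT_mono (Nat.le_add_left n Ng) hp)
  · rintro ⟨hu, hv⟩ p -
    rw [show z ∘ Sum.inl = 0 from funext hu, krylovForm_zero_left,
      krylovForm_eq_zero_of_card_le _ _ _ (by simp) hv]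
    simp
end

section
/- Let Γ ∈ ℝ^{n×N_g} be the unique solution of F Γ + e_1 f_1ᵀ = Γ G, where F is the n×n companion-type matrix with subdiagonal ones and last column (−α_0,...,−α_{n-1})ᵀ, G is the N_g×N_g companion matrix with superdiagonal ones and last row (−ξ_0,...,−ξ_{N_g−1}), e_1 ∈ ℝ^n is the first standard basis vector, and f_1ᵀ = (1,0,...,0) ∈ ℝ^{1×N_g}, and assume the characteristic polynomials of F and G are coprime. Partition Γ = [Γ_1 Γ_2] with Γ_2 ∈ ℝ^{n×ℓ} consisting of the last ℓ columns, for 1 ≤ ℓ ≤ N_g. Then rank(Γ_2) = min{n, ℓ}. -/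
/-! Read column by column, the Sylvester equation says that the columns of `Γ`, counted from the
right, satisfy `w (k + 1) = F (w k) + c • w 0` with `c` an entry of `ξ`. Hence the last `ℓ`
columns span the Krylov space `span {w 0, F w 0, …, F^(ℓ-1) w 0}`. Krylov dimensions grow by
exactly one at each step until the spaces stabilise, so the `ℓ`-th one has dimension `min ℓ d`,
where `d = rank Γ = min n Ng`. -/

open Matrix Submodule Module

section Krylov

variable {K V : Type*} [Field K] [AddCommGroup V] [Module K V] (f : Module.End K V) (v : V)

def krylov (m : ℕ) : Submodule K V :=
  span K ((fun i => (f ^ i) v) '' Set.Iio m)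

instance (m : ℕ) : FiniteDimensional K (krylov f v m) :=
  FiniteDimensional.span_of_finite K ((Set.finite_Iio m).image _)

theorem krylov_mono : Monotone (krylov f v) := fun _ _ h =>
  span_mono (Set.image_mono (Set.Iio_subset_Iio h))

variable {f v}

theorem pow_apply_mem_krylov {i m : ℕ} (h : i < m) : (f ^ i) v ∈ krylov f v m :=
  subset_span ⟨i, h, rfl⟩

theorem apply_mem_krylov_succ {m : ℕ} {x : V} (hx : x ∈ krylov f v m) :
    f x ∈ krylov f v (m + 1) := by
  refine span_induction (fun _ ⟨i, hi, hy⟩ => ?_) (by simp)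
    (fun _ _ _ _ hx hy => by simpa using add_mem hx hy)
    (fun c _ _ hx => by simpa using smul_mem _ c hx) hx
  rw [← hy, ← Module.End.mul_apply, ← pow_succ']
  exact pow_apply_mem_krylov (Nat.succ_lt_succ hi)

theorem krylov_le_of_krylov_succ_le {a : ℕ} (h : krylov f v (a + 1) ≤ krylov f v a) (b : ℕ) :
    krylov f v b ≤ krylov f v a := by
  have key : ∀ i, (f ^ i) v ∈ krylov f v a := by
    intro i
    induction i with
    | zero => exact h (pow_apply_mem_krylov (Nat.succ_pos a))
    | succ i ih => simpa [pow_succ'] using h (apply_mem_krylov_succ ih)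
  exact span_le.2 (Set.image_subset_iff.2 fun i _ => key i)

theorem finrank_krylov_le (m : ℕ) : finrank K (krylov f v m) ≤ m := by
  classical
  have := finrank_span_finset_le_card (R := K) ((Finset.range m).image fun i => (f ^ i) v)
  rw [Finset.coe_image, Finset.coe_range] at this
  exact this.trans Finset.card_image_le |>.trans (Finset.card_range m).le

theorem finrank_krylov_eq_min {m N : ℕ} (h : m ≤ N) :
    finrank K (krylov f v m) = min m (finrank K (krylov f v N)) := by
  by_cases hgrow : ∀ a < m, finrank K (krylov f v a) < finrank K (krylov f v (a + 1))
  · have hle : ∀ a ≤ m, a ≤ finrank K (krylov f v a) := by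
      intro a ha
      induction a with
      | zero => exact Nat.zero_le _
      | succ a ih => exact (ih (by omega)).trans_lt (hgrow a ha)
    have := Submodule.finrank_mono (krylov_mono f v h)
    have := hle m le_rfl
    have := finrank_krylov_le (f := f) (v := v) m
    omega
  · push Not at hgrow
    obtain ⟨a, ham, ha⟩ := hgrow
    have hstab := krylov_le_of_krylov_succ_le
      (Submodule.eq_of_le_of_finrank_le (krylov_mono f v a.le_succ) ha).ge
    have hmN : krylov f v m = krylov f v N :=
      le_antisymm (krylov_mono f v h) ((hstab N).trans (krylov_mono f v ham.le))
    have := finrank_krylov_le (f := f) (v := v) m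
    rw [← hmN]
    omega

theorem mem_krylov_of_recurrence {w : ℕ → V} {N : ℕ}
    (hw : ∀ k, k + 1 < N → ∃ c : K, w (k + 1) = f (w k) + c • w 0) {k : ℕ} (hk : k < N) :
    w k ∈ krylov f (w 0) (k + 1) := by
  induction k with
  | zero => simpa using pow_apply_mem_krylov (f := f) (v := w 0) Nat.zero_lt_one
  | succ k ih =>
    obtain ⟨c, hc⟩ := hw k hk
    rw [hc]
    exact add_mem (apply_mem_krylov_succ (ih (by omega)))
      (smul_mem _ c (by simpa using pow_apply_mem_krylov (f := f) (v := w 0) (Nat.succ_pos _)))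

theorem pow_apply_mem_span_of_recurrence {w : ℕ → V} {N : ℕ}
    (hw : ∀ k, k + 1 < N → ∃ c : K, w (k + 1) = f (w k) + c • w 0) {k : ℕ} (hk : k < N) :
    (f ^ k) (w 0) ∈ span K (w '' Set.Iio (k + 1)) := by
  have hw0 : ∀ {t}, 0 < t → w 0 ∈ span K (w '' Set.Iio t) :=
    fun ht => subset_span ⟨0, ht, rfl⟩
  induction k with
  | zero => exact hw0 Nat.zero_lt_one
  | succ k ih =>
    rw [pow_succ', Module.End.mul_apply]
    refine span_induction (fun _ ⟨i, hi, hy⟩ => ?_) (by simp)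
      (fun _ _ _ _ hx hy => by simpa using add_mem hx hy)
      (fun c _ _ hx => by simpa using smul_mem _ c hx) (ih (by omega))
    obtain ⟨c, hc⟩ := hw i (by simp at hi; omega)
    rw [← hy, show f (w i) = w (i + 1) - c • w 0 by rw [hc]; abel]
    exact sub_mem (subset_span ⟨i + 1, by simpa using hi, rfl⟩) (smul_mem _ c (hw0 (by omega)))

theorem span_image_Iio_eq_krylov {w : ℕ → V} {N : ℕ}
    (hw : ∀ k, k + 1 < N → ∃ c : K, w (k + 1) = f (w k) + c • w 0) {m : ℕ} (hm : m ≤ N) :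
    span K (w '' Set.Iio m) = krylov f (w 0) m := by
  apply le_antisymm <;> refine span_le.2 (Set.image_subset_iff.2 fun k (hk : k < m) => ?_)
  · exact krylov_mono f (w 0) hk (mem_krylov_of_recurrence hw (by omega))
  · exact span_mono (Set.image_mono (Set.Iio_subset_Iio hk))
      (pow_apply_mem_span_of_recurrence hw (by omega))

end Krylov

section CompanionSylvester

variable {R : Type*} [CommRing R] {n Ng : ℕ}

theorem col_eq_mulVec_col_succ_add_smul_col_last {ξ : Fin Ng → R}
    {F : Matrix (Fin n) (Fin n) R} {G : Matrix (Fin Ng) (Fin Ng) R} {Γ : Matrix (Fin n) (Fin Ng) R}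
    (hG : G = Matrix.of fun (i j : Fin Ng) =>
      if (j : ℕ) = (i : ℕ) + 1 then (1 : R) else if (i : ℕ) = Ng - 1 then -ξ j else 0)
    (hΓ : F * Γ + (Matrix.of fun (i : Fin n) (j : Fin Ng) =>
      if (i : ℕ) = 0 ∧ (j : ℕ) = 0 then (1 : R) else 0) = Γ * G)
    {j : ℕ} (hj : j + 1 < Ng) :
    Γ.col ⟨j, by omega⟩ =
      F *ᵥ Γ.col ⟨j + 1, hj⟩ + ξ ⟨j + 1, hj⟩ • Γ.col ⟨Ng - 1, by omega⟩ := by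
  have hGcol : ∀ k : Fin Ng, G k ⟨j + 1, hj⟩ =
      (if k = ⟨j, by omega⟩ then 1 else 0) -
        (if k = ⟨Ng - 1, by omega⟩ then ξ ⟨j + 1, hj⟩ else 0) := by
    intro k
    simp only [hG, of_apply, Fin.ext_iff, Nat.add_right_cancel_iff]
    split_ifs <;> first | omega | ring
  ext i
  have h := congrFun (congrFun hΓ i) ⟨j + 1, hj⟩
  simp only [Matrix.add_apply, of_apply, Nat.add_one_ne_zero, and_false, if_false, add_zero,
    mul_apply, hGcol, mul_sub, mul_ite, mul_one, mul_zero, Finset.sum_sub_distrib,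
    Finset.sum_ite_eq', Finset.mem_univ, if_true] at h
  simp only [Pi.add_apply, Pi.smul_apply, smul_eq_mul, col_apply, mulVec, dotProduct, h]
  ring

theorem range_col_trailing_eq_image {m α : Type*} (Γ : Matrix m (Fin Ng) α) (hNg : 0 < Ng)
    {ℓ : ℕ} (hℓ : ℓ ≤ Ng) :
    Set.range (Matrix.of fun (i : m) (j : Fin ℓ) =>
      Γ i ⟨Ng - ℓ + (j : ℕ), by have := j.isLt; omega⟩).col =
      (fun k : ℕ => Γ.col ⟨Ng - 1 - k, by omega⟩) '' Set.Iio ℓ := by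
  ext x
  constructor
  · rintro ⟨j, rfl⟩
    refine ⟨ℓ - 1 - j, by simp; omega, ?_⟩
    ext i
    simp only [col_apply, of_apply]
    congr 2
    omega
  · rintro ⟨k, hk, rfl⟩
    simp only [Set.mem_Iio] at hk
    refine ⟨⟨ℓ - 1 - k, by omega⟩, ?_⟩
    ext i
    simp only [col_apply, of_apply]
    congr 2
    omega

end CompanionSylvester

/-- any block of trailing columns of the solution Γ of the companion
Sylvester equation FΓ + e₁f₁ᵀ = ΓG has full rank: rank(Γ₂) = min{n,ℓ}. -/
theorem stmt_15 (n Ng : ℕ)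
    (ξ : Fin Ng → ℝ)
    (F : Matrix (Fin n) (Fin n) ℝ)
    -- G: companion matrix with superdiagonal ones and last row -ξ
    (G : Matrix (Fin Ng) (Fin Ng) ℝ)
    (hG : G = Matrix.of fun (i j : Fin Ng) =>
      if (j : ℕ) = (i : ℕ) + 1 then (1 : ℝ) else if (i : ℕ) = Ng - 1 then -ξ j else 0)
    (Γ : Matrix (Fin n) (Fin Ng) ℝ)
    (hΓ : F * Γ + (Matrix.of fun (i : Fin n) (j : Fin Ng) =>
      if (i : ℕ) = 0 ∧ (j : ℕ) = 0 then (1 : ℝ) else 0) = Γ * G)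
    (hΓrank : Γ.rank = min n Ng)
    (ℓ : ℕ) (hℓ2 : ℓ ≤ Ng) :
    (Matrix.of fun (i : Fin n) (j : Fin ℓ) =>
      Γ i ⟨Ng - ℓ + (j : ℕ), by have := j.isLt; omega⟩).rank = min n ℓ := by
  rcases Nat.eq_zero_or_pos ℓ with rfl | hℓ
  · simp [rank_eq_finrank_span_cols]
  have hNg : 0 < Ng := hℓ.trans_le hℓ2
  set w : ℕ → Fin n → ℝ := fun k => Γ.col ⟨Ng - 1 - k, by omega⟩
  have hw : ∀ k, k + 1 < Ng → ∃ c : ℝ, w (k + 1) = F.mulVecLin (w k) + c • w 0 := by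
    intro k hk
    have h := col_eq_mulVec_col_succ_add_smul_col_last hG hΓ (j := Ng - 1 - (k + 1)) (by omega)
    have e : Ng - 1 - (k + 1) + 1 = Ng - 1 - k := by omega
    simp only [e] at h
    exact ⟨_, by simpa [w] using h⟩
  have hrank : ∀ m (hm : m ≤ Ng), (Matrix.of fun (i : Fin n) (j : Fin m) =>
      Γ i ⟨Ng - m + (j : ℕ), by have := j.isLt; omega⟩).rank =
        finrank ℝ (krylov F.mulVecLin (w 0) m) := fun m hm => by
    rw [rank_eq_finrank_span_cols, range_col_trailing_eq_image Γ hNg hm,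
      span_image_Iio_eq_krylov hw hm]
  have hfull : Γ.rank = finrank ℝ (krylov F.mulVecLin (w 0) Ng) := by
    convert hrank Ng le_rfl using 2
    ext i j
    simp
  rw [hrank ℓ hℓ2, finrank_krylov_eq_min hℓ2, ← hfull, hΓrank]
  omega
end

section
/- Let A be an n×n real matrix. There exists a row vector C ∈ ℝ^{1×n} such that the pair (C, A) is observable (i.e., the matrix with rows C A^i, i = 0,...,n-1, is invertible) if and only if A is non-derogatory, i.e., the minimal polynomial of A equals its characteristic polynomial. -/
/-!
If `c ᵥ* Aⁱ` (`i < n`) are independent, no polynomial of degree `< n` kills `c`, in particular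
not the minimal polynomial; as it divides the characteristic polynomial, of degree `n`, the two
are equal. Conversely, the vectors `c` killed by some nonzero polynomial of degree `< deg m`,
`m` the minimal polynomial, all lie in one of the subspaces `ker (m / p)(A)`, `p` a prime factor
of `m`: the annihilator of `c` is a principal ideal, generated by a proper divisor of `m`, which
divides some `m / p`. These finitely many subspaces are proper, and a vector space over an
infinite field is not a finite union of proper subspaces.
-/

open Matrix Polynomial UniqueFactorizationMonoid

theorem Polynomial.aeval_eq_sum_degreeLTEquiv {R S : Type*} [CommRing R] [Ring S] [Algebra R S]
    {n : ℕ} {p : R[X]} (hp : p ∈ degreeLT R n) (a : S) :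
    aeval a p = ∑ i, degreeLTEquiv R n ⟨p, hp⟩ i • a ^ (i : ℕ) := by
  rw [aeval_def, eval₂_eq_sum]
  simp_rw [← Algebra.smul_def]
  exact (sum_fin _ (by simp) (mem_degreeLT.mp hp)).symm

theorem linearIndependent_map_pow_iff {K S V : Type*} [Field K] [Ring S] [Algebra K S]
    [AddCommGroup V] [Module K V] (φ : S →ₗ[K] V) (a : S) (n : ℕ) :
    LinearIndependent K (fun i : Fin n => φ (a ^ (i : ℕ))) ↔
      ∀ p ∈ degreeLT K n, φ (aeval a p) = 0 → p = 0 := by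
  rw [Fintype.linearIndependent_iff, (degreeLTEquiv K n).symm.toEquiv.forall_congr_left]
  refine Subtype.forall.trans (forall₂_congr fun p hp => ?_)
  simp only [LinearEquiv.coe_toEquiv_symm, LinearEquiv.symm_symm, EquivLike.coe_coe]
  rw [aeval_eq_sum_degreeLTEquiv hp, map_sum, ← degreeLTEquiv_eq_zero_iff_eq_zero hp, funext_iff]
  simp only [map_smul, Pi.zero_apply]

theorem exists_mem_normalizedFactors_div_mem {R : Type*} [EuclideanDomain R]
    [NormalizationMonoid R] (I : Ideal R) {m r : R} (hm : m ∈ I) (hm0 : m ≠ 0) (hr : r ∈ I)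
    (hmr : ¬ m ∣ r) : ∃ p ∈ normalizedFactors m, m / p ∈ I := by
  obtain ⟨d, rfl⟩ := (IsPrincipalIdealRing.principal I).principal
  simp only [Ideal.submodule_span_eq, Ideal.mem_span_singleton] at hm hr ⊢
  obtain ⟨e, rfl⟩ := hm
  have he : ¬ IsUnit e := fun he => hmr ((associated_mul_unit_left d e he).dvd.trans hr)
  obtain ⟨q, hq, hqe⟩ := WfDvdMonoid.exists_irreducible_factor he (right_ne_zero_of_mul hm0)
  obtain ⟨p, hp, hqp⟩ := exists_mem_normalizedFactors_of_dvd hm0 hq (hqe.mul_left d)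
  obtain ⟨e', rfl⟩ := hqp.symm.dvd.trans hqe
  refine ⟨p, hp, e', ?_⟩
  rw [mul_left_comm, mul_div_cancel_left₀ _ (prime_of_normalized_factor p hp).ne_zero]

theorem minpoly.aeval_div_ne_zero {K A : Type*} [Field K] [Ring A] [Algebra K A] {x : A}
    (hx : IsIntegral K x) {p : K[X]} (hp : p ∣ minpoly K x) (hp0 : 0 < p.degree) :
    Polynomial.aeval x (minpoly K x / p) ≠ 0 := by
  have hm0 := minpoly.ne_zero hx
  have hdiv0 : minpoly K x / p ≠ 0 := fun h => hm0 <| by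
    rw [← EuclideanDomain.mul_div_cancel' (ne_zero_of_degree_gt hp0) hp, h, mul_zero]
  exact fun h => (degree_div_lt hm0 hp0).not_ge (minpoly.degree_le_of_ne_zero K x hdiv0 h)

namespace Matrix

variable {ι K : Type*} [Fintype ι] [DecidableEq ι] [Field K]

theorem minpoly_eq_charpoly_iff (A : Matrix ι ι K) :
    minpoly K A = A.charpoly ↔ Fintype.card ι ≤ (minpoly K A).natDegree := by
  refine ⟨fun h => (h ▸ A.charpoly_natDegree_eq_dim).ge, fun h => ?_⟩
  refine (eq_of_monic_of_dvd_of_natDegree_le (minpoly.monic A.isIntegral) A.charpoly_monic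
    A.minpoly_dvd_charpoly ?_).symm
  rwa [charpoly_natDegree_eq_dim]

theorem linearIndependent_vecMul_pow_iff (c : ι → K) (A : Matrix ι ι K) (n : ℕ) :
    LinearIndependent K (fun i : Fin n => c ᵥ* A ^ (i : ℕ)) ↔
      ∀ p ∈ degreeLT K n, c ᵥ* aeval A p = 0 → p = 0 := by
  simpa using linearIndependent_map_pow_iff (vecMulBilin K K c) A n

theorem le_natDegree_minpoly_of_linearIndependent {c : ι → K} {A : Matrix ι ι K} {n : ℕ}
    (hc : LinearIndependent K (fun i : Fin n => c ᵥ* A ^ (i : ℕ))) :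
    n ≤ (minpoly K A).natDegree := by
  by_contra! hlt
  refine minpoly.ne_zero A.isIntegral ((linearIndependent_vecMul_pow_iff c A n).1 hc _ ?_ ?_)
  · exact mem_degreeLT.2 ((degree_le_natDegree).trans_lt (by exact_mod_cast hlt))
  · simp

def annihilatingIdeal (A : Matrix ι ι K) (c : ι → K) : Ideal K[X] where
  carrier := {p | c ᵥ* aeval A p = 0}
  add_mem' _ _ := by simp_all [vecMul_add]
  zero_mem' := by simp
  smul_mem' q p _ := by simp_all [smul_eq_mul, mul_comm q p, ← vecMul_vecMul]

theorem mem_annihilatingIdeal {A : Matrix ι ι K} {c : ι → K} {p : K[X]} :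
    p ∈ annihilatingIdeal A c ↔ c ᵥ* aeval A p = 0 := Iff.rfl

theorem exists_linearIndependent_vecMul_pow [Infinite K] (A : Matrix ι ι K) :
    ∃ c : ι → K,
      LinearIndependent K (fun i : Fin (minpoly K A).natDegree => c ᵥ* A ^ (i : ℕ)) := by
  classical
  set m := minpoly K A
  let W (p : (normalizedFactors m).toFinset) : Subspace K (ι → K) :=
    LinearMap.ker (vecMulLinear (aeval A (m / (p : K[X]))))
  obtain ⟨c, hc⟩ : ∃ c, ∀ p, c ∉ W p := by
    by_contra! h
    obtain ⟨⟨p, hp⟩, hWp⟩ :=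
      Subspace.exists_eq_top_of_iUnion_eq_univ (p := W) (Set.iUnion_eq_univ_iff.2 h)
    have hpm := Multiset.mem_toFinset.1 hp
    refine minpoly.aeval_div_ne_zero A.isIntegral (dvd_of_mem_normalizedFactors hpm)
      (irreducible_of_normalized_factor p hpm).degree_pos (ext_iff_vecMul.2 fun v => ?_)
    have hv : v ∈ W ⟨p, hp⟩ := hWp ▸ Submodule.mem_top
    exact (LinearMap.mem_ker.1 hv).trans (vecMul_zero v).symm
  refine ⟨c, (linearIndependent_vecMul_pow_iff c A _).2 fun p hp hcp => by_contra fun hp0 => ?_⟩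
  have hmp : ¬ m ∣ p := fun h => (degree_le_of_dvd h hp0).not_gt <| by
    rwa [degree_eq_natDegree (minpoly.ne_zero A.isIntegral), ← mem_degreeLT]
  obtain ⟨q, hq, hmq⟩ := exists_mem_normalizedFactors_div_mem (annihilatingIdeal A c)
    (mem_annihilatingIdeal.2 (by simp)) (minpoly.ne_zero A.isIntegral)
    (mem_annihilatingIdeal.2 hcp) hmp
  exact hc ⟨q, Multiset.mem_toFinset.2 hq⟩ (mem_annihilatingIdeal.1 hmq)

end Matrix

/-- there exists a row vector C making (C,A) observable iff A is
non-derogatory, i.e. its minimal polynomial equals its characteristic polynomial. -/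
theorem stmt_18 (n : ℕ) (A : Matrix (Fin n) (Fin n) ℝ) :
    (∃ C : Matrix (Fin 1) (Fin n) ℝ,
      IsUnit (Matrix.of fun (i : Fin n) (j : Fin n) => (C * A ^ (i : ℕ)) 0 j)) ↔
    minpoly ℝ A = A.charpoly := by
  rw [minpoly_eq_charpoly_iff, Fintype.card_fin]
  constructor
  · rintro ⟨C, hC⟩
    exact le_natDegree_minpoly_of_linearIndependent (c := C 0)
      (linearIndependent_rows_iff_isUnit.2 hC)
  · intro h
    obtain ⟨c, hc⟩ := exists_linearIndependent_vecMul_pow A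
    exact ⟨replicateRow (Fin 1) c,
      linearIndependent_rows_iff_isUnit.1 (hc.comp (Fin.castLE h) (Fin.castLE_injective h))⟩
end
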